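/- For every ε > 0, the matrix A + 2πε·(E₁₁ + E₂₁) (the derivative of the lift F_{C,ε} of the conservative map at the fixed point p = 0, namely the matrix with rows (2 + 2πε, 1, 0), (1 + 2πε, 2, 1), (0, 1, 1)) has three distinct real eigenvalues μ₁ < μ₂ < μ₃ satisfying 0 < μ₁ < 1 < μ₂ < 3 < μ₃, with μ₁μ₂μ₃ = 1. In particular the derivative at p is hyperbolic with a one-dimensional stable direction and a weak–strong splitting of the unstable directions, for every ε > 0. -/
import Mathlib


open Polynomial

/-- The derivative at the fixed point `p = 0` of the lift of the conservative map `f_{C,ε}`: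
the matrix `A + 2πε·(E₁₁ + E₂₁)`. -/
noncomputable def MC (ε : ℝ) : Matrix (Fin 3) (Fin 3) ℝ :=
  !![2 + 2 * Real.pi * ε, 1, 0; 1 + 2 * Real.pi * ε, 2, 1; 0, 1, 1]

lemma MC_eval (ε x : ℝ) : ((MC ε).charpoly).eval x =
    x^3 - (5 + 2*Real.pi*ε)*x^2 + (6 + 2*(2*Real.pi*ε))*x - 1 := by
  simp [Matrix.charpoly, Matrix.det_fin_three, Matrix.charmatrix_apply, MC,
    Matrix.vecHead, Matrix.vecTail, Function.comp]
  ring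

/-- For every `ε > 0`, the matrix `A + 2πε·(E₁₁ + E₂₁)` has three distinct real eigenvalues
`μ₁ < μ₂ < μ₃` with `0 < μ₁ < 1 < μ₂ < 3 < μ₃` and `μ₁μ₂μ₃ = 1`: the derivative at `p` is
hyperbolic with a one-dimensional stable direction and a weak–strong splitting of the
unstable directions. -/
theorem conservative_derivative_spectrum (ε : ℝ) (hε : 0 < ε) :
    ∃ μ₁ μ₂ μ₃ : ℝ, μ₁ < μ₂ ∧ μ₂ < μ₃ ∧
      0 < μ₁ ∧ μ₁ < 1 ∧ 1 < μ₂ ∧ μ₂ < 3 ∧ 3 < μ₃ ∧ μ₁ * μ₂ * μ₃ = 1 ∧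
      (MC ε).charpoly = (X - C μ₁) * (X - C μ₂) * (X - C μ₃) := by
  set δ := 2 * Real.pi * ε with hδdef
  have hδ : 0 < δ := by positivity
  set f : ℝ → ℝ := fun x => x^3 - (5 + δ)*x^2 + (6 + 2*δ)*x - 1 with hf
  have hcont : Continuous f := by fun_prop
  have hf0 : f 0 = -1 := by simp [hf]
  have hf1 : f 1 = 1 + δ := by simp [hf]; ring
  have hf3 : f 3 = -1 - 3*δ := by simp [hf]; ring
  have hfT : f (5 + δ) = 29 + 16*δ + 2*δ^2 := by simp [hf]; ring
  -- root in (0,1)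
  obtain ⟨μ₁, hμ₁mem, hμ₁⟩ : ∃ μ ∈ Set.Ioo (0:ℝ) 1, f μ = 0 := by
    have h := intermediate_value_Ioo (by norm_num : (0:ℝ) ≤ 1) hcont.continuousOn
    have : (0:ℝ) ∈ Set.Ioo (f 0) (f 1) := by rw [hf0, hf1]; constructor <;> nlinarith
    obtain ⟨μ, hμ, hμ0⟩ := h this
    exact ⟨μ, hμ, hμ0⟩
  obtain ⟨μ₂, hμ₂mem, hμ₂⟩ : ∃ μ ∈ Set.Ioo (1:ℝ) 3, f μ = 0 := by
    have h := intermediate_value_Ioo' (by norm_num : (1:ℝ) ≤ 3) hcont.continuousOn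
    have : (0:ℝ) ∈ Set.Ioo (f 3) (f 1) := by rw [hf3, hf1]; constructor <;> nlinarith
    obtain ⟨μ, hμ, hμ0⟩ := h this
    exact ⟨μ, hμ, hμ0⟩
  obtain ⟨μ₃, hμ₃mem, hμ₃⟩ : ∃ μ ∈ Set.Ioo (3:ℝ) (5 + δ), f μ = 0 := by
    have h := intermediate_value_Ioo (by nlinarith : (3:ℝ) ≤ 5 + δ) hcont.continuousOn
    have : (0:ℝ) ∈ Set.Ioo (f 3) (f (5 + δ)) := by rw [hf3, hfT]; constructor <;> nlinarith
    obtain ⟨μ, hμ, hμ0⟩ := h this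
    exact ⟨μ, hμ, hμ0⟩
  obtain ⟨h01, h11⟩ := hμ₁mem
  obtain ⟨h12, h23'⟩ := hμ₂mem
  obtain ⟨h33, h3T⟩ := hμ₃mem
  have hlt12 : μ₁ < μ₂ := lt_trans h11 h12
  have hlt23 : μ₂ < μ₃ := lt_trans h23' h33
  -- turn roots into polynomial equations
  have e1 : μ₁^3 - (5 + δ)*μ₁^2 + (6 + 2*δ)*μ₁ - 1 = 0 := hμ₁
  have e2 : μ₂^3 - (5 + δ)*μ₂^2 + (6 + 2*δ)*μ₂ - 1 = 0 := hμ₂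
  have e3 : μ₃^3 - (5 + δ)*μ₃^2 + (6 + 2*δ)*μ₃ - 1 = 0 := hμ₃
  -- Vieta via distinctness
  have eq1 : (μ₁+μ₂+μ₃ - (5+δ))*μ₁^2 + ((6+2*δ) - (μ₁*μ₂+μ₁*μ₃+μ₂*μ₃))*μ₁ + (μ₁*μ₂*μ₃ - 1) = 0 := by
    linear_combination e1
  have eq2 : (μ₁+μ₂+μ₃ - (5+δ))*μ₂^2 + ((6+2*δ) - (μ₁*μ₂+μ₁*μ₃+μ₂*μ₃))*μ₂ + (μ₁*μ₂*μ₃ - 1) = 0 := by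
    linear_combination e2
  have eq3 : (μ₁+μ₂+μ₃ - (5+δ))*μ₃^2 + ((6+2*δ) - (μ₁*μ₂+μ₁*μ₃+μ₂*μ₃))*μ₃ + (μ₁*μ₂*μ₃ - 1) = 0 := by
    linear_combination e3
  have h12' : (μ₁+μ₂+μ₃ - (5+δ))*(μ₁+μ₂) + ((6+2*δ) - (μ₁*μ₂+μ₁*μ₃+μ₂*μ₃)) = 0 := by
    have h : (μ₁ - μ₂) * ((μ₁+μ₂+μ₃ - (5+δ))*(μ₁+μ₂) + ((6+2*δ) - (μ₁*μ₂+μ₁*μ₃+μ₂*μ₃))) = 0 := by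
      linear_combination eq1 - eq2
    rcases mul_eq_zero.mp h with h' | h'
    · exact absurd (sub_eq_zero.mp h') (ne_of_lt hlt12)
    · exact h'
  have h23'' : (μ₁+μ₂+μ₃ - (5+δ))*(μ₂+μ₃) + ((6+2*δ) - (μ₁*μ₂+μ₁*μ₃+μ₂*μ₃)) = 0 := by
    have h : (μ₂ - μ₃) * ((μ₁+μ₂+μ₃ - (5+δ))*(μ₂+μ₃) + ((6+2*δ) - (μ₁*μ₂+μ₁*μ₃+μ₂*μ₃))) = 0 := by
      linear_combination eq2 - eq3
    rcases mul_eq_zero.mp h with h' | h'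
    · exact absurd (sub_eq_zero.mp h') (ne_of_lt hlt23)
    · exact h'
  have ha : μ₁+μ₂+μ₃ = 5 + δ := by
    have h : (μ₁ - μ₃) * (μ₁+μ₂+μ₃ - (5+δ)) = 0 := by linear_combination h12' - h23''
    rcases mul_eq_zero.mp h with h' | h'
    · exact absurd (sub_eq_zero.mp h') (ne_of_lt (lt_trans hlt12 hlt23))
    · linarith [sub_eq_zero.mp h']
  have hb : μ₁*μ₂+μ₁*μ₃+μ₂*μ₃ = 6 + 2*δ := by linear_combination -h12' + (μ₁+μ₂)*(ha)
  have hc : μ₁*μ₂*μ₃ = 1 := by linear_combination eq1 - μ₁^2*ha + μ₁*hb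
  refine ⟨μ₁, μ₂, μ₃, hlt12, hlt23, h01, h11, h12, h23', h33, hc, ?_⟩
  apply Polynomial.funext
  intro x
  rw [MC_eval]
  simp only [eval_mul, eval_sub, eval_X, eval_C]
  rw [← hδdef]
  linear_combination x^2*ha - x*hb + hc
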